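/- Let X and Y be finite sets, μ a probability measure on X with μ(x) > 0 for all x, ν a probability measure on Y with ν(y) > 0 for all y, and R : X × Y → [0,∞) with Σ_y R(x,y) > 0 for every x and Σ_x R(x,y) > 0 for every y (R need not have total mass 1). Let μ̄(x) = Σ_y R(x,y) be the X-marginal of R. Let (φ_n)_{n≥0} be the Sinkhorn iterates φ_{n+1} = ((φ_n)⁺)⁻ starting from φ₀ ≡ 0, with Y-marginals ρ_n(y) = Σ_x e^{φ_n(y) − (φ_n)⁺(x)} R(x,y). Then for every coupling π ∈ Π(μ,ν) absolutely continuous with respect to R and every n ≥ 1, H(ρ_n|ν) ≤ ( H(π|R) − H(μ|μ̄) )/n, where H(μ|μ̄) = Σ_x μ(x) ln( μ(x)/μ̄(x) ). In particular H(ρ_n|ν) ≤ ( H*(μ,ν,R) + ln(Σ_{x,y} R(x,y)) )/n, where H*(μ,ν,R) = inf_{π∈Π(μ,ν)} H(π|R). -/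

import Mathlib

open scoped BigOperators

/-- The `+`-transform: `φ⁺(x) = ln( Σ_y e^{φ(y)} R(x,y) / μ(x) )`. -/
noncomputable def plusT {X Y : Type*} [Fintype Y] (μ : X → ℝ) (R : X → Y → ℝ)
    (φ : Y → ℝ) (x : X) : ℝ :=
  Real.log ((∑ y, Real.exp (φ y) * R x y) / μ x)

/-- The `−`-transform: `ψ⁻(y) = −ln( Σ_x e^{−ψ(x)} R(x,y) / ν(y) )`. -/
noncomputable def minusT {X Y : Type*} [Fintype X] (ν : Y → ℝ) (R : X → Y → ℝ)
    (ψ : X → ℝ) (y : Y) : ℝ :=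
  -Real.log ((∑ x, Real.exp (-ψ x) * R x y) / ν y)

/-- The coupling `π(φ)(x,y) = e^{φ(y) − φ⁺(x)} R(x,y)`. -/
noncomputable def coupling {X Y : Type*} [Fintype Y] (μ : X → ℝ) (R : X → Y → ℝ)
    (φ : Y → ℝ) (x : X) (y : Y) : ℝ :=
  Real.exp (φ y - plusT μ R φ x) * R x y


/-!
Write `ψₙ = φₙ⁺` and `Sₙ = Σₓ μ(x) ψₙ(x)`. The plans `π(φₙ)` and `π(φₙ₊₁)` are both compared with
the half-step plan `e^{φₙ₊₁(y) - ψₙ(x)} R(x,y)`, whose `Y`-marginal is exactly `ν`: the log-sum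
inequality applied to `X`-marginals, resp. `Y`-marginals, gives
`H(ρₙ₊₁|ν) ≤ Sₙ - Sₙ₊₁ ≤ H(ρₙ|ν)`. So `H(ρₙ|ν)` decreases and telescoping yields
`n H(ρₙ|ν) ≤ S₀ - Sₙ`, where `S₀ = -H(μ|μ̄)`. Gibbs' inequality `H(π|π(φₙ)) ≥ 0` is the weak
duality `Σ ν φₙ - Sₙ ≤ H(π|R)`, and `Σ ν φₙ ≥ 0` since it grows by `H(ν|ρₙ)` at every step.
-/

section RelativeEntropy

open Real Finset Function InformationTheory

variable {ι : Type*} [Fintype ι]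

/-- Since `x / 0 = 0` and `log 0 = 0`, a term with `q i = 0 < p i` contributes `0` rather than
`+∞`: absolute continuity of `p` with respect to `q` has to be assumed wherever it matters. -/
noncomputable def relEntropy (p q : ι → ℝ) : ℝ :=
  ∑ i, p i * log (p i / q i)

lemma relEntropy_self (p : ι → ℝ) : relEntropy p p = 0 :=
  sum_eq_zero fun i _ => by rw [log_div_self, mul_zero]

lemma relEntropy_exp_mul_left (t r : ι → ℝ) :
    relEntropy (fun i => exp (t i) * r i) r = ∑ i, exp (t i) * r i * t i := by
  refine sum_congr rfl fun i _ => ?_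
  rcases eq_or_ne (r i) 0 with h | h
  · simp [h]
  · rw [mul_div_cancel_right₀ _ h, log_exp]

lemma relEntropy_exp_mul_right {p r : ι → ℝ} (hpr : ∀ i, r i = 0 → p i = 0) (t : ι → ℝ) :
    relEntropy p (fun i => exp (t i) * r i) = relEntropy p r - ∑ i, p i * t i := by
  rw [relEntropy, relEntropy, ← sum_sub_distrib]
  refine sum_congr rfl fun i _ => ?_
  rcases eq_or_ne (p i) 0 with h | h
  · simp [h]
  · have hr : r i ≠ 0 := fun h' => h (hpr i h')
    rw [mul_comm (exp _), ← div_div, log_div (div_ne_zero h hr) (exp_pos _).ne', log_exp]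
    ring

lemma sub_le_mul_log_div {a d : ℝ} (ha : 0 ≤ a) (hd : 0 < d) : a - d ≤ a * log (a / d) := by
  have h := mul_nonneg hd.le (klFun_nonneg (div_nonneg ha hd.le))
  rw [klFun_apply, mul_sub, mul_add, ← mul_assoc, mul_div_cancel₀ a hd.ne'] at h
  linarith

lemma mul_log_sum_div_sum_le_relEntropy {p q : ι → ℝ} (hp : ∀ i, 0 ≤ p i) (hq : ∀ i, 0 ≤ q i)
    (hpq : ∀ i, q i = 0 → p i = 0) :
    (∑ i, p i) * log ((∑ i, p i) / ∑ i, q i) ≤ relEntropy p q := by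
  set P := ∑ i, p i
  set Q := ∑ i, q i
  rcases (show 0 ≤ P from sum_nonneg fun i _ => hp i).eq_or_lt with hP | hP
  · have hp0 : ∀ i, p i = 0 := fun i =>
      (sum_eq_zero_iff_of_nonneg fun i _ => hp i).1 hP.symm i (mem_univ i)
    simp [← hP, relEntropy, hp0]
  obtain ⟨j, -, hj⟩ := (sum_pos_iff_of_nonneg fun i _ => hp i).1 hP
  have hQ : 0 < Q := (sum_pos_iff_of_nonneg fun i _ => hq i).2
    ⟨j, mem_univ j, (hq j).lt_of_ne fun h => hj.ne' (hpq j h.symm)⟩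
  have key : ∀ i, p i - q i * (P / Q) ≤ p i * log (p i / q i) - p i * log (P / Q) := by
    intro i
    rcases (hp i).eq_or_lt with hpi | hpi
    · rw [← hpi]
      simpa using mul_nonneg (hq i) (div_pos hP hQ).le
    have hqi : 0 < q i := (hq i).lt_of_ne fun h => hpi.ne' (hpq i h.symm)
    calc p i - q i * (P / Q) ≤ p i * log (p i / (q i * (P / Q))) :=
          sub_le_mul_log_div hpi.le (by positivity)
      _ = p i * log (p i / q i) - p i * log (P / Q) := by
          rw [← div_div, log_div (div_pos hpi hqi).ne' (div_pos hP hQ).ne', mul_sub]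
  have hsum := sum_le_sum fun i (_ : i ∈ univ) => key i
  rw [sum_sub_distrib, sum_sub_distrib, ← sum_mul, ← sum_mul, mul_div_cancel₀ P hQ.ne',
    sub_self] at hsum
  exact sub_nonneg.1 hsum

lemma relEntropy_nonneg {p q : ι → ℝ} (hp : ∀ i, 0 ≤ p i) (hq : ∀ i, 0 ≤ q i)
    (hpq : ∀ i, q i = 0 → p i = 0) (hsum : ∑ i, p i = ∑ i, q i) : 0 ≤ relEntropy p q := by
  simpa [hsum] using mul_log_sum_div_sum_le_relEntropy hp hq hpq

lemma neg_relEntropy_le_log_sum {p q : ι → ℝ} (hp : ∀ i, 0 ≤ p i) (hq : ∀ i, 0 ≤ q i)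
    (hpq : ∀ i, q i = 0 → p i = 0) (hsum : ∑ i, p i = 1) :
    -relEntropy p q ≤ log (∑ i, q i) := by
  have h := mul_log_sum_div_sum_le_relEntropy hp hq hpq
  rwa [hsum, one_mul, one_div, log_inv, neg_le] at h

variable {X Y : Type*} [Fintype X] [Fintype Y]

lemma relEntropy_uncurry (p q : X → Y → ℝ) :
    relEntropy (uncurry p) (uncurry q) = ∑ x, ∑ y, p x y * log (p x y / q x y) :=
  Fintype.sum_prod_type _

lemma sum_prod_mul_sub (p : X → Y → ℝ) (f : X → ℝ) (g : Y → ℝ) :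
    ∑ z : X × Y, p z.1 z.2 * (g z.2 - f z.1) =
      ∑ y, (∑ x, p x y) * g y - ∑ x, (∑ y, p x y) * f x := by
  simp only [Fintype.sum_prod_type, mul_sub, sum_sub_distrib, sum_mul]
  rw [sum_comm]

lemma relEntropy_fst_le {p q : X → Y → ℝ} (hp : ∀ x y, 0 ≤ p x y) (hq : ∀ x y, 0 ≤ q x y)
    (hpq : ∀ x y, q x y = 0 → p x y = 0) :
    relEntropy (fun x => ∑ y, p x y) (fun x => ∑ y, q x y) ≤
      relEntropy (uncurry p) (uncurry q) := by
  rw [relEntropy_uncurry]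
  exact sum_le_sum fun x _ => mul_log_sum_div_sum_le_relEntropy (hp x) (hq x) (hpq x)

lemma relEntropy_snd_le {p q : X → Y → ℝ} (hp : ∀ x y, 0 ≤ p x y) (hq : ∀ x y, 0 ≤ q x y)
    (hpq : ∀ x y, q x y = 0 → p x y = 0) :
    relEntropy (fun y => ∑ x, p x y) (fun y => ∑ x, q x y) ≤
      relEntropy (uncurry p) (uncurry q) := by
  unfold relEntropy
  rw [Fintype.sum_prod_type_right]
  exact sum_le_sum fun y _ => mul_log_sum_div_sum_le_relEntropy (fun x => hp x y)
    (fun x => hq x y) (fun x => hpq x y)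

end RelativeEntropy

section Sinkhorn

open Real Finset Function

variable {X Y : Type*} {μ : X → ℝ} {ν : Y → ℝ} {R : X → Y → ℝ}

lemma sum_exp_mul_pos {ι : Type*} [Fintype ι] {r : ι → ℝ} (hr : ∀ i, 0 ≤ r i)
    (hsum : 0 < ∑ i, r i) (t : ι → ℝ) : 0 < ∑ i, exp (t i) * r i := by
  obtain ⟨i, -, hi⟩ := (sum_pos_iff_of_nonneg fun i _ => hr i).1 hsum
  exact (sum_pos_iff_of_nonneg fun i _ => mul_nonneg (exp_pos _).le (hr i)).2
    ⟨i, mem_univ i, mul_pos (exp_pos _) hi⟩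

noncomputable def gibbs (R : X → Y → ℝ) (f : X → ℝ) (g : Y → ℝ) (x : X) (y : Y) : ℝ :=
  exp (g y - f x) * R x y

lemma coupling_eq_gibbs [Fintype Y] (φ : Y → ℝ) :
    coupling μ R φ = gibbs R (plusT μ R φ) φ :=
  rfl

lemma gibbs_nonneg (hR : ∀ x y, 0 ≤ R x y) (f : X → ℝ) (g : Y → ℝ) (x : X) (y : Y) :
    0 ≤ gibbs R f g x y :=
  mul_nonneg (exp_pos _).le (hR x y)

lemma gibbs_eq_zero_iff {f : X → ℝ} {g : Y → ℝ} {x : X} {y : Y} :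
    gibbs R f g x y = 0 ↔ R x y = 0 := by
  simp [gibbs, (exp_pos _).ne']

lemma sum_gibbs_right [Fintype Y] (hμpos : ∀ x, 0 < μ x) (hR : ∀ x y, 0 ≤ R x y)
    (hrow : ∀ x, 0 < ∑ y, R x y) (f : X → ℝ) (g : Y → ℝ) (x : X) :
    ∑ y, gibbs R f g x y = exp (plusT μ R g x - f x) * μ x := by
  have hplus : exp (plusT μ R g x) * μ x = ∑ y, exp (g y) * R x y := by
    rw [plusT, exp_log (div_pos (sum_exp_mul_pos (hR x) (hrow x) g) (hμpos x)),
      div_mul_cancel₀ _ (hμpos x).ne']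
  calc ∑ y, gibbs R f g x y = exp (-f x) * ∑ y, exp (g y) * R x y := by
        simp only [mul_sum, gibbs, sub_eq_add_neg, exp_add, mul_assoc, mul_left_comm]
    _ = exp (plusT μ R g x - f x) * μ x := by
        rw [← hplus, sub_eq_add_neg, exp_add]
        ring

lemma sum_gibbs_left [Fintype X] (hνpos : ∀ y, 0 < ν y) (hR : ∀ x y, 0 ≤ R x y)
    (hcol : ∀ y, 0 < ∑ x, R x y) (f : X → ℝ) (g : Y → ℝ) (y : Y) :
    ∑ x, gibbs R f g x y = exp (g y - minusT ν R f y) * ν y := by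
  have hminus : exp (-minusT ν R f y) * ν y = ∑ x, exp (-f x) * R x y := by
    rw [minusT, neg_neg,
      exp_log (div_pos (sum_exp_mul_pos (fun x => hR x y) (hcol y) _) (hνpos y)),
      div_mul_cancel₀ _ (hνpos y).ne']
  calc ∑ x, gibbs R f g x y = exp (g y) * ∑ x, exp (-f x) * R x y := by
        simp only [mul_sum, gibbs, sub_eq_add_neg, exp_add, mul_assoc]
    _ = exp (g y - minusT ν R f y) * ν y := by
        rw [← hminus, sub_eq_add_neg, exp_add]
        ring

lemma relEntropy_gibbs_gibbs [Fintype X] [Fintype Y] (f f' : X → ℝ) (g g' : Y → ℝ) :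
    relEntropy (uncurry (gibbs R f g)) (uncurry (gibbs R f' g')) =
      ∑ y, (∑ x, gibbs R f g x y) * (g y - g' y) -
        ∑ x, (∑ y, gibbs R f g x y) * (f x - f' x) := by
  have hR : ∀ z : X × Y, uncurry R z = 0 → uncurry (gibbs R f g) z = 0 :=
    fun z h => gibbs_eq_zero_iff.2 h
  rw [← sum_prod_mul_sub]
  calc relEntropy (uncurry (gibbs R f g)) (uncurry (gibbs R f' g'))
      = relEntropy (uncurry (gibbs R f g)) (uncurry R) -
          ∑ z, uncurry (gibbs R f g) z * (g' z.2 - f' z.1) :=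
        relEntropy_exp_mul_right hR (fun z => g' z.2 - f' z.1)
    _ = ∑ z : X × Y, gibbs R f g z.1 z.2 * ((g z.2 - g' z.2) - (f z.1 - f' z.1)) := by
        rw [show relEntropy (uncurry (gibbs R f g)) (uncurry R) = _ from
          relEntropy_exp_mul_left (fun z : X × Y => g z.2 - f z.1) (uncurry R), ← sum_sub_distrib]
        refine sum_congr rfl fun z _ => ?_
        simp only [uncurry, gibbs]
        ring

lemma sum_coupling_right [Fintype Y] (hμpos : ∀ x, 0 < μ x) (hR : ∀ x y, 0 ≤ R x y)
    (hrow : ∀ x, 0 < ∑ y, R x y) (φ : Y → ℝ) (x : X) : ∑ y, coupling μ R φ x y = μ x := by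
  rw [coupling_eq_gibbs, sum_gibbs_right hμpos hR hrow, sub_self, exp_zero, one_mul]

lemma sum_mul_plusT_sub_le_relEntropy [Fintype X] [Fintype Y] (hμpos : ∀ x, 0 < μ x)
    (hνpos : ∀ y, 0 < ν y) (hR : ∀ x y, 0 ≤ R x y) (hrow : ∀ x, 0 < ∑ y, R x y)
    (hcol : ∀ y, 0 < ∑ x, R x y) (φ : Y → ℝ) :
    ∑ x, μ x * plusT μ R φ x - ∑ x, μ x * plusT μ R (minusT ν R (plusT μ R φ)) x ≤
      relEntropy (fun y => ∑ x, coupling μ R φ x y) ν := by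
  -- `π(φ)` against the half-step plan `gibbs R φ⁺ (φ⁺)⁻`, through their `X`-marginals
  have hdp := relEntropy_fst_le (gibbs_nonneg hR (plusT μ R φ) φ)
    (gibbs_nonneg hR (plusT μ R φ) (minusT ν R (plusT μ R φ)))
    fun x y h => gibbs_eq_zero_iff.2 (gibbs_eq_zero_iff.1 h)
  rw [relEntropy_gibbs_gibbs] at hdp
  simp only [sum_gibbs_right hμpos hR hrow, sum_gibbs_left hνpos hR hcol, sub_self, exp_zero,
    one_mul, mul_zero, sum_const_zero, sub_zero] at hdp
  rw [relEntropy_exp_mul_right (fun _ h => h), relEntropy_self] at hdp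
  simp only [coupling_eq_gibbs, sum_gibbs_left hνpos hR hcol]
  rw [relEntropy_exp_mul_left]
  convert hdp using 1
  rw [zero_sub, ← sum_sub_distrib, ← sum_neg_distrib]
  simp only [mul_sub, neg_sub]

lemma relEntropy_le_sum_mul_plusT_sub [Fintype X] [Fintype Y] (hμpos : ∀ x, 0 < μ x)
    (hνpos : ∀ y, 0 < ν y) (hR : ∀ x y, 0 ≤ R x y) (hrow : ∀ x, 0 < ∑ y, R x y)
    (hcol : ∀ y, 0 < ∑ x, R x y) (φ : Y → ℝ) :
    relEntropy (fun y => ∑ x, coupling μ R (minusT ν R (plusT μ R φ)) x y) ν ≤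
      ∑ x, μ x * plusT μ R φ x - ∑ x, μ x * plusT μ R (minusT ν R (plusT μ R φ)) x := by
  -- `π((φ⁺)⁻)` against the half-step plan `gibbs R φ⁺ (φ⁺)⁻`, through their `Y`-marginals
  have hdp := relEntropy_snd_le
    (gibbs_nonneg hR (plusT μ R (minusT ν R (plusT μ R φ))) (minusT ν R (plusT μ R φ)))
    (gibbs_nonneg hR (plusT μ R φ) (minusT ν R (plusT μ R φ)))
    fun x y h => gibbs_eq_zero_iff.2 (gibbs_eq_zero_iff.1 h)
  rw [relEntropy_gibbs_gibbs] at hdp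
  simp only [sum_gibbs_right hμpos hR hrow, sum_gibbs_left hνpos hR hcol, sub_self, exp_zero,
    one_mul, mul_zero, sum_const_zero, zero_sub] at hdp
  simp only [coupling_eq_gibbs, sum_gibbs_left hνpos hR hcol]
  refine hdp.trans (le_of_eq ?_)
  rw [← sum_sub_distrib, ← sum_neg_distrib]
  simp only [mul_sub, neg_sub]

lemma sum_mul_le_sum_mul_minusT_plusT [Fintype X] [Fintype Y] (hμpos : ∀ x, 0 < μ x)
    (hνpos : ∀ y, 0 < ν y) (hR : ∀ x y, 0 ≤ R x y) (hrow : ∀ x, 0 < ∑ y, R x y)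
    (hcol : ∀ y, 0 < ∑ x, R x y) (hmass : ∑ x, μ x = ∑ y, ν y) (φ : Y → ℝ) :
    ∑ y, ν y * φ y ≤ ∑ y, ν y * minusT ν R (plusT μ R φ) y := by
  have hρ : ∑ y, ∑ x, coupling μ R φ x y = ∑ y, ν y := by
    rw [sum_comm]
    simp only [sum_coupling_right hμpos hR hrow, hmass]
  simp only [coupling_eq_gibbs, sum_gibbs_left hνpos hR hcol] at hρ
  have hρpos : ∀ y, 0 < exp (φ y - minusT ν R (plusT μ R φ) y) * ν y :=
    fun y => mul_pos (exp_pos _) (hνpos y)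
  have h := relEntropy_nonneg (fun y => (hνpos y).le) (fun y => (hρpos y).le)
    (fun y h => absurd h (hρpos y).ne') hρ.symm
  rw [relEntropy_exp_mul_right (fun _ h => h), relEntropy_self, zero_sub, neg_nonneg] at h
  simp only [mul_sub, sum_sub_distrib] at h
  linarith

lemma sum_mul_sub_sum_mul_plusT_le_relEntropy [Fintype X] [Fintype Y] (hμpos : ∀ x, 0 < μ x)
    (hR : ∀ x y, 0 ≤ R x y) (hrow : ∀ x, 0 < ∑ y, R x y) {p : X → Y → ℝ}
    (hp : ∀ x y, 0 ≤ p x y) (hpμ : ∀ x, ∑ y, p x y = μ x) (hpν : ∀ y, ∑ x, p x y = ν y)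
    (hpR : ∀ x y, R x y = 0 → p x y = 0) (φ : Y → ℝ) :
    ∑ y, ν y * φ y - ∑ x, μ x * plusT μ R φ x ≤ relEntropy (uncurry p) (uncurry R) := by
  have hmass : ∑ z, uncurry p z = ∑ z, uncurry (coupling μ R φ) z := by
    simp only [Fintype.sum_prod_type, uncurry_apply_pair, hpμ, sum_coupling_right hμpos hR hrow]
  have h := relEntropy_nonneg (p := uncurry p) (q := uncurry (coupling μ R φ))
    (fun z => hp z.1 z.2) (fun z => gibbs_nonneg hR _ _ z.1 z.2)
    (fun z h => hpR z.1 z.2 (gibbs_eq_zero_iff.1 h)) hmass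
  rw [show relEntropy (uncurry p) (uncurry (coupling μ R φ)) = _ from
      relEntropy_exp_mul_right (fun z => hpR z.1 z.2) (fun z : X × Y => φ z.2 - plusT μ R φ z.1),
    sum_prod_mul_sub] at h
  simp only [hpμ, hpν] at h
  exact sub_nonneg.1 h

lemma sum_mul_plusT_zero [Fintype X] [Fintype Y] :
    ∑ x, μ x * plusT μ R 0 x = -relEntropy μ (fun x => ∑ y, R x y) := by
  rw [relEntropy, ← sum_neg_distrib]
  refine sum_congr rfl fun x _ => ?_
  simp only [plusT, Pi.zero_apply, exp_zero, one_mul, ← inv_div (μ x), log_inv, mul_neg]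

end Sinkhorn

lemma natCast_mul_le_sub_of_antitone {a b : ℕ → ℝ} (ha : Antitone a)
    (hab : ∀ m, a (m + 1) ≤ b m - b (m + 1)) (n : ℕ) : n * a n ≤ b 0 - b n := by
  induction n with
  | zero => simp
  | succ n ih =>
    have hmono : (n : ℝ) * a (n + 1) ≤ n * a n :=
      mul_le_mul_of_nonneg_left (ha n.le_succ) n.cast_nonneg
    push_cast
    linarith [hab n]

/-- sublinear rate for a general reference measure `R` (not
necessarily of mass 1). With `μ̄(x) = Σ_y R(x,y)` and Sinkhorn iterates started
from `φ₀ ≡ 0`, for every coupling `π ∈ Π(μ,ν)` absolutely continuous w.r.t. `R`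
and every `n ≥ 1`, `H(ρ_n|ν) ≤ (H(π|R) − H(μ|μ̄))/n`; in particular
`H(ρ_n|ν) ≤ (H(π|R) + ln(Σ R))/n`. -/
theorem sinkhorn_sublinear_rate_general {X Y : Type*} [Fintype X] [Fintype Y]
    (μ : X → ℝ) (ν : Y → ℝ) (R : X → Y → ℝ)
    (hμpos : ∀ x, 0 < μ x) (hμ : ∑ x, μ x = 1)
    (hνpos : ∀ y, 0 < ν y) (hν : ∑ y, ν y = 1)
    (hR : ∀ x y, 0 ≤ R x y)
    (hrow : ∀ x, 0 < ∑ y, R x y) (hcol : ∀ y, 0 < ∑ x, R x y)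
    (μbar : X → ℝ) (hμbar : ∀ x, μbar x = ∑ y, R x y)
    (φ : ℕ → Y → ℝ) (hφ0 : φ 0 = 0)
    (hiter : ∀ n, φ (n + 1) = minusT ν R (plusT μ R (φ n)))
    (ρ : ℕ → Y → ℝ) (hρ : ∀ n y, ρ n y = ∑ x, coupling μ R (φ n) x y) :
    ∀ π : X → Y → ℝ, (∀ x y, 0 ≤ π x y) →
      (∀ x, ∑ y, π x y = μ x) → (∀ y, ∑ x, π x y = ν y) →
      (∀ x y, R x y = 0 → π x y = 0) →
      ∀ n : ℕ, 1 ≤ n →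
        (∑ y, ρ n y * Real.log (ρ n y / ν y) ≤
            ((∑ x, ∑ y, π x y * Real.log (π x y / R x y)) -
              ∑ x, μ x * Real.log (μ x / μbar x)) / n) ∧
        (∑ y, ρ n y * Real.log (ρ n y / ν y) ≤
            ((∑ x, ∑ y, π x y * Real.log (π x y / R x y)) +
              Real.log (∑ x, ∑ y, R x y)) / n) := by
  intro π hπ0 hπX hπY hπR n hn
  have hρ' : ∀ m, ρ m = fun y => ∑ x, coupling μ R (φ m) x y := fun m => funext (hρ m)
  set S : ℕ → ℝ := fun m => ∑ x, μ x * plusT μ R (φ m) x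
  have hdecr : ∀ m, relEntropy (ρ (m + 1)) ν ≤ S m - S (m + 1) := fun m => by
    simpa only [S, hρ', hiter] using
      relEntropy_le_sum_mul_plusT_sub hμpos hνpos hR hrow hcol (φ m)
  have hincr : ∀ m, S m - S (m + 1) ≤ relEntropy (ρ m) ν := fun m => by
    simpa only [S, hρ', hiter] using
      sum_mul_plusT_sub_le_relEntropy hμpos hνpos hR hrow hcol (φ m)
  have htele := natCast_mul_le_sub_of_antitone (a := fun m => relEntropy (ρ m) ν) (b := S)
    (antitone_nat_of_succ_le fun m => (hdecr m).trans (hincr m)) hdecr n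
  have hS0 : S 0 = -relEntropy μ μbar := by
    simp only [S, hφ0, sum_mul_plusT_zero, ← funext hμbar]
  have hmono : Monotone fun m => ∑ y, ν y * φ m y := monotone_nat_of_le_succ fun m => by
    simpa only [hiter] using
      sum_mul_le_sum_mul_minusT_plusT hμpos hνpos hR hrow hcol (hμ.trans hν.symm) (φ m)
  have hdual := sum_mul_sub_sum_mul_plusT_le_relEntropy hμpos hR hrow hπ0 hπX hπY hπR (φ n)
  have hnonneg : 0 ≤ ∑ y, ν y * φ n y := by
    simpa [hφ0] using hmono (Nat.zero_le n)
  have hbound : n * relEntropy (ρ n) ν ≤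
      relEntropy (Function.uncurry π) (Function.uncurry R) - relEntropy μ μbar := by
    linarith
  have hlog : -relEntropy μ μbar ≤ Real.log (∑ x, ∑ y, R x y) := by
    have hμbar_pos : ∀ x, 0 < μbar x := fun x => hμbar x ▸ hrow x
    have h := neg_relEntropy_le_log_sum (fun x => (hμpos x).le) (fun x => (hμbar_pos x).le)
      (fun x h => absurd h (hμbar_pos x).ne') hμ
    simpa only [hμbar] using h
  rw [relEntropy_uncurry] at hbound
  have hn' : (0 : ℝ) < n := by exact_mod_cast hn
  change relEntropy (ρ n) ν ≤ (_ - relEntropy μ μbar) / n ∧ relEntropy (ρ n) ν ≤ _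
  constructor <;> rw [le_div_iff₀ hn'] <;> linarith
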